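/- Let $W^H$ be a fractional Brownian motion with $H \in (0,1)$ and $\alpha, \nu > 0$, $m \in \mathbb{R}$. The process $X_t = \nu \int_{-\infty}^{t} e^{-\alpha(t-s)} dW^H_s + m$ (pathwise Riemann-Stieltjes integral) satisfies the fractional Langevin equation $dX_t = -\alpha(X_t - m)\,dt + \nu\, dW^H_t$; equivalently, for all $t \ge 0$, $X_t = X_0 - \alpha \int_0^t (X_s - m)\, ds + \nu (W^H_t - W^H_0)$ almost surely. -/

import Mathlib

open MeasureTheory ProbabilityTheory Real Set Filter

def IsGaussianProcess {Ω : Type*} [MeasurableSpace Ω] (μ : Measure Ω)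
    (W : ℝ → Ω → ℝ) : Prop :=
  ∀ (n : ℕ) (t : Fin n → ℝ) (c : Fin n → ℝ), ∃ (m : ℝ) (v : NNReal),
    μ.map (fun ω => ∑ i, c i * W (t i) ω) = gaussianReal m v

def IsFBM {Ω : Type*} [MeasurableSpace Ω] (μ : Measure Ω) (H : ℝ)
    (W : ℝ → Ω → ℝ) : Prop :=
  (∀ t, Measurable (W t)) ∧
  IsGaussianProcess μ W ∧
  (∀ t, ∫ ω, W t ω ∂μ = 0) ∧
  (∀ t s, ∫ ω, W t ω * W s ω ∂μ =
    (|t| ^ (2 * H) + |s| ^ (2 * H) - |t - s| ^ (2 * H)) / 2)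

/-- The stationary fractional Ornstein-Uhlenbeck process
\`X_t = ν ∫_{-∞}^t e^{-α(t-s)} dW^H_s + m\`, where the pathwise
Riemann-Stieltjes integral against \`W^H\` is understood via integration by
parts: \`∫_{-∞}^t e^{-α(t-s)} dW^H_s = W^H_t - α ∫_{-∞}^t e^{-α(t-s)} W^H_s ds\`. -/
noncomputable def fOU {Ω : Type*} (W : ℝ → Ω → ℝ) (α ν m : ℝ)
    (t : ℝ) (ω : Ω) : ℝ :=
  ν * (W t ω - α * ∫ s in Iic t, Real.exp (-(α * (t - s))) * W s ω) + m

/-! Path by path, `Y x = ∫_{-∞}^x e^{-α(x-s)} w s ds = e^{-αx} ∫_{-∞}^x e^{αs} w s ds` is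
differentiable with `Y' = w - α Y`; since `X = ν (w - α Y) + m`, integrating `Y'` over `[0, t]`
is the integrated Langevin equation. -/

theorem hasDerivAt_integral_Iic {E : Type*} [NormedAddCommGroup E] [NormedSpace ℝ E]
    [CompleteSpace E] {g : ℝ → E} (hg : Continuous g) (hint : ∀ a, IntegrableOn g (Iic a)) (x : ℝ) :
    HasDerivAt (fun y => ∫ s in Iic y, g s) (g x) x := by
  have hFTC : HasDerivAt (fun y => ∫ s in (0 : ℝ)..y, g s) (g x) x :=
    intervalIntegral.integral_hasDerivAt_right (hg.intervalIntegrable 0 x)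
      (hg.stronglyMeasurableAtFilter _ _) hg.continuousAt
  refine (hFTC.const_add (∫ s in Iic 0, g s)).congr_of_eventuallyEq (.of_forall fun y => ?_)
  simp only [← intervalIntegral.integral_Iic_sub_Iic (hint 0) (hint y), add_sub_cancel]

theorem integral_Iic_exp_mul_eq (α x : ℝ) (w : ℝ → ℝ) :
    ∫ s in Iic x, exp (-(α * (x - s))) * w s
      = exp (-(α * x)) * ∫ s in Iic x, exp (α * s) * w s := by
  rw [← integral_const_mul]
  congr 1 with s
  rw [← mul_assoc, ← exp_add]
  ring_nf

theorem hasDerivAt_integral_Iic_exp_mul {α : ℝ} {w : ℝ → ℝ} (hw : Continuous w)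
    (hint : ∀ a, IntegrableOn (fun s => exp (α * s) * w s) (Iic a)) (x : ℝ) :
    HasDerivAt (fun y => ∫ s in Iic y, exp (-(α * (y - s))) * w s)
      (w x - α * ∫ s in Iic x, exp (-(α * (x - s))) * w s) x := by
  simp only [integral_Iic_exp_mul_eq]
  have hexp : HasDerivAt (fun y => exp (-(α * y))) (-α * exp (-(α * x))) x := by
    simpa [mul_comm] using ((hasDerivAt_id x).const_mul α).neg.exp
  refine (hexp.mul (hasDerivAt_integral_Iic (by fun_prop) hint x)).congr_deriv ?_
  rw [← mul_assoc, ← exp_add, neg_add_cancel, exp_zero, one_mul]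
  ring

theorem integral_Iic_exp_mul_sub_eq {α : ℝ} {w : ℝ → ℝ} (hw : Continuous w)
    (hint : ∀ a, IntegrableOn (fun s => exp (α * s) * w s) (Iic a)) (a b : ℝ) :
    (∫ s in Iic b, exp (-(α * (b - s))) * w s) - ∫ s in Iic a, exp (-(α * (a - s))) * w s
      = ∫ s in a..b, (w s - α * ∫ u in Iic s, exp (-(α * (s - u))) * w u) := by
  have hderiv := hasDerivAt_integral_Iic_exp_mul hw hint
  have hcont : Continuous fun x => ∫ s in Iic x, exp (-(α * (x - s))) * w s :=
    continuous_iff_continuousAt.2 fun x => (hderiv x).continuousAt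
  exact (intervalIntegral.integral_eq_sub_of_hasDerivAt (fun x _ => hderiv x)
    ((hw.sub (continuous_const.mul hcont)).intervalIntegrable a b)).symm

theorem fOU_solves_langevin_general
    {Ω : Type*} [MeasurableSpace Ω] (μ : Measure Ω) (W : ℝ → Ω → ℝ) (α ν m : ℝ)
    (hpath : ∀ᵐ ω ∂μ, (Continuous fun s => W s ω) ∧
      ∀ t : ℝ, IntegrableOn (fun s => Real.exp (α * s) * W s ω) (Iic t)) :
    ∀ᵐ ω ∂μ, ∀ t : ℝ, 0 ≤ t →
      fOU W α ν m t ω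
        = fOU W α ν m 0 ω - α * (∫ s in (0 : ℝ)..t, (fOU W α ν m s ω - m))
          + ν * (W t ω - W 0 ω) := by
  filter_upwards [hpath] with ω ⟨hcont, hint⟩ t _
  have hdrift : ∫ s in (0 : ℝ)..t, (fOU W α ν m s ω - m)
      = ν * ((∫ s in Iic t, exp (-(α * (t - s))) * W s ω)
          - ∫ s in Iic 0, exp (-(α * (0 - s))) * W s ω) := by
    simp only [fOU, add_sub_cancel_right, intervalIntegral.integral_const_mul]
    rw [integral_Iic_exp_mul_sub_eq hcont hint]
  rw [hdrift]
  simp only [fOU]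
  ring

/-- The fractional Ornstein-Uhlenbeck process satisfies the fractional
Langevin equation: `X_t = X_0 - α ∫_0^t (X_s - m) ds + ν (W^H_t - W^H_0)`
for all `t ≥ 0`, almost surely. -/
theorem fOU_solves_langevin
    {Ω : Type*} [MeasurableSpace Ω] (μ : Measure Ω) [IsProbabilityMeasure μ]
    (H : ℝ) (hH : H ∈ Set.Ioo (0 : ℝ) 1) (W : ℝ → Ω → ℝ) (hW : IsFBM μ H W)
    (α ν m : ℝ) (hα : 0 < α) (hν : 0 < ν)
    (hpath : ∀ᵐ ω ∂μ, (Continuous fun s => W s ω) ∧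
      ∀ t : ℝ, IntegrableOn (fun s => Real.exp (α * s) * W s ω) (Iic t)) :
    ∀ᵐ ω ∂μ, ∀ t : ℝ, 0 ≤ t →
      fOU W α ν m t ω
        = fOU W α ν m 0 ω - α * (∫ s in (0 : ℝ)..t, (fOU W α ν m s ω - m))
          + ν * (W t ω - W 0 ω) :=
  fOU_solves_langevin_general μ W α ν m hpath
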